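/- Let f ∈ H^{0,1}(ℝ₊) and λ ∈ ℂ with Im(λ²) < 0. Then the function F(t) = ∫_t^∞ f(τ) e^{-4 Im(λ²)(t-τ)} dτ belongs to H^{1,1}(ℝ₊), with ‖F‖_{H^{1,1}(ℝ₊)} ≤ c ‖f‖_{H^{0,1}(ℝ₊)} for a constant c depending only on λ. -/

import Mathlib

open MeasureTheory Set Filter Topology


noncomputable def kern (a s : ℝ) : ENNReal := ENNReal.ofReal (Real.exp (-(a * s)))

lemma kern_meas (a : ℝ) : Measurable (kern a) := by
  apply ENNReal.measurable_ofReal.comp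
  exact (Real.continuous_exp.comp (continuous_const.mul continuous_id).neg).measurable

lemma exp_integrableOn' {a : ℝ} (ha : 0 < a) (t : ℝ) :
    IntegrableOn (fun τ => Real.exp (-(a * (τ - t)))) (Ioi t) := by
  have h := (exp_neg_integrableOn_Ioi t ha).mul_const (Real.exp (a * t))
  apply h.congr (Filter.Eventually.of_forall fun x => ?_)
  simp only [← Real.exp_add]
  ring_nf

lemma exp_hasDerivAt {a : ℝ} (ha : 0 < a) (t x : ℝ) :
    HasDerivAt (fun τ => -Real.exp (-(a * (τ - t))) / a)
      (Real.exp (-(a * (x - t)))) x := by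
  have h1 : HasDerivAt (fun τ : ℝ => -(a * (τ - t))) (-a) x := by
    have : HasDerivAt (fun τ : ℝ => τ - t) 1 x := (hasDerivAt_id x).sub_const t
    have h' : HasDerivAt (fun τ : ℝ => -(a * (τ - t))) (-(a * 1)) x := (this.const_mul a).neg
    simpa using h'
  have h3 : HasDerivAt (fun x => -(Real.exp (-(a * (x - t))) / a))
      (-(Real.exp (-(a * (x - t))) * -a / a)) x := ((h1.exp).div_const a).neg
  have he : (fun τ => -Real.exp (-(a * (τ - t))) / a)
      = fun x => -(Real.exp (-(a * (x - t))) / a) := by ext τ; ring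
  rw [he]
  convert h3 using 1
  field_simp

lemma exp_integrableOn {a : ℝ} (ha : 0 < a) (t : ℝ) :
    IntegrableOn (fun τ => Real.exp (-(a * (τ - t)))) (Ioi t) := by
  have h := (exp_neg_integrableOn_Ioi t ha).mul_const (Real.exp (a * t))
  apply h.congr (Filter.Eventually.of_forall fun x => ?_)
  simp only [← Real.exp_add]
  ring_nf

lemma exp_int {a : ℝ} (ha : 0 < a) (t : ℝ) :
    ∫ τ in Ioi t, Real.exp (-(a * (τ - t))) = 1 / a := by
  have htend : Tendsto (fun τ => -Real.exp (-(a * (τ - t))) / a) atTop (nhds 0) := by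
    have h0 : Tendsto (fun τ : ℝ => a * (τ - t)) atTop atTop :=
      (tendsto_atTop_add_const_right _ (-t) tendsto_id).const_mul_atTop ha
    have h1 : Tendsto (fun τ : ℝ => -(a * (τ - t))) atTop atBot :=
      tendsto_neg_atTop_atBot.comp h0
    have h2 := (Real.tendsto_exp_atBot.comp h1).neg.div_const a
    simpa using h2
  have := integral_Ioi_of_hasDerivAt_of_tendsto
    (f := fun τ => -Real.exp (-(a * (τ - t))) / a)
    (f' := fun τ => Real.exp (-(a * (τ - t))))
    ((exp_hasDerivAt ha t t).continuousAt.continuousWithinAt)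
    (fun x _ => exp_hasDerivAt ha t x)
    (exp_integrableOn' ha t) htend
  rw [this]
  field_simp
  simp

lemma exp_lint {a : ℝ} (ha : 0 < a) (t : ℝ) :
    ∫⁻ τ in Ioi t, kern a (τ - t) = ENNReal.ofReal (1 / a) := by
  rw [show (fun τ => kern a (τ - t)) = fun τ => ENNReal.ofReal (Real.exp (-(a * (τ - t)))) from rfl,
    ← ofReal_integral_eq_lintegral_ofReal (exp_integrableOn' ha t)
      (Filter.Eventually.of_forall fun x => (Real.exp_pos _).le), exp_int ha t]

lemma exp_lint_left {a : ℝ} (ha : 0 < a) (τ : ℝ) :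
    ∫⁻ t in Iio τ, kern a (τ - t) = ENNReal.ofReal (1 / a) := by
  have hmp : MeasurePreserving (fun s : ℝ => τ - s) volume volume :=
    Measure.measurePreserving_sub_left volume τ
  have hemb : MeasurableEmbedding (fun s : ℝ => τ - s) :=
    (MeasurableEquiv.subLeft τ).measurableEmbedding
  have hpre : (fun s : ℝ => τ - s) ⁻¹' (Ioi 0) = Iio τ := by
    ext s; simp [sub_pos]
  have := hmp.setLIntegral_comp_preimage_emb hemb (kern a) (Ioi 0)
  rw [hpre] at this
  rw [this]
  have := exp_lint ha (0 : ℝ)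
  simpa using this

lemma lint_CS {ν : Measure ℝ} (f g : ℝ → ENNReal) (hf : AEMeasurable f ν)
    (hg : AEMeasurable g ν) :
    (∫⁻ x, f x * g x ∂ν) ^ (2:ℕ) ≤ (∫⁻ x, f x ^ (2:ℕ) ∂ν) * ∫⁻ x, g x ^ (2:ℕ) ∂ν := by
  have hpq : Real.HolderConjugate 2 2 := Real.HolderConjugate.two_two
  have h := ENNReal.lintegral_mul_le_Lp_mul_Lq ν hpq hf hg
  have e1 : ∫⁻ x, f x ^ (2:ℝ) ∂ν = ∫⁻ x, f x ^ (2:ℕ) ∂ν :=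
    lintegral_congr fun x => by rw [← ENNReal.rpow_natCast]; norm_num
  have e2 : ∫⁻ x, g x ^ (2:ℝ) ∂ν = ∫⁻ x, g x ^ (2:ℕ) ∂ν :=
    lintegral_congr fun x => by rw [← ENNReal.rpow_natCast]; norm_num
  rw [e1, e2] at h
  calc (∫⁻ x, f x * g x ∂ν) ^ (2:ℕ)
      ≤ ((∫⁻ x, f x ^ (2:ℕ) ∂ν) ^ (1/2 : ℝ) * (∫⁻ x, g x ^ (2:ℕ) ∂ν) ^ (1/2 : ℝ)) ^ (2:ℕ) := by
        gcongr
        exact h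
    _ = (∫⁻ x, f x ^ (2:ℕ) ∂ν) * ∫⁻ x, g x ^ (2:ℕ) ∂ν := by
        rw [mul_pow, ← ENNReal.rpow_natCast (_ ^ (1/2:ℝ)) 2, ← ENNReal.rpow_natCast (_ ^ (1/2:ℝ)) 2,
          ← ENNReal.rpow_mul, ← ENNReal.rpow_mul]
        norm_num

lemma kern_half_sq {a : ℝ} (s : ℝ) : kern (a/2) s * kern (a/2) s = kern a s := by
  unfold kern
  rw [← ENNReal.ofReal_mul (Real.exp_pos _).le, ← Real.exp_add]
  congr 1
  ring

lemma CS_bound {a : ℝ} (ha : 0 < a) (q : ℝ → ENNReal) (hq : Measurable q) (t : ℝ) :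
    (∫⁻ τ in Ioi t, q τ * kern a (τ - t)) ^ (2:ℕ)
      ≤ ENNReal.ofReal (1/a) * ∫⁻ τ in Ioi t, q τ ^ (2:ℕ) * kern a (τ - t) := by
  set f : ℝ → ENNReal := fun τ => kern (a/2) (τ - t) with hf
  have hfm : Measurable f := (kern_meas _).comp (measurable_id.sub measurable_const)
  have e0 : ∀ τ, q τ * kern a (τ - t) = f τ * (q τ * f τ) := by
    intro τ
    rw [show f τ * (q τ * f τ) = q τ * (f τ * f τ) by ring, hf]
    rw [kern_half_sq]
  have e1 : ∫⁻ τ in Ioi t, f τ ^ (2:ℕ) = ENNReal.ofReal (1/a) := by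
    rw [← exp_lint ha t]
    apply lintegral_congr fun τ => ?_
    rw [sq, kern_half_sq]
  have e2 : ∫⁻ τ in Ioi t, (q τ * f τ) ^ (2:ℕ) = ∫⁻ τ in Ioi t, q τ ^ (2:ℕ) * kern a (τ - t) := by
    apply lintegral_congr fun τ => ?_
    rw [mul_pow, sq (f τ), kern_half_sq]
  calc (∫⁻ τ in Ioi t, q τ * kern a (τ - t)) ^ (2:ℕ)
      = (∫⁻ τ in Ioi t, f τ * (q τ * f τ)) ^ (2:ℕ) := by
        congr 1; exact lintegral_congr fun τ => e0 τ
    _ ≤ (∫⁻ τ in Ioi t, f τ ^ (2:ℕ)) * ∫⁻ τ in Ioi t, (q τ * f τ) ^ (2:ℕ) :=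
        lint_CS f _ hfm.aemeasurable (hq.mul hfm).aemeasurable
    _ = ENNReal.ofReal (1/a) * ∫⁻ τ in Ioi t, q τ ^ (2:ℕ) * kern a (τ - t) := by rw [e1, e2]

lemma op_bound {a : ℝ} (ha : 0 < a) (q : ℝ → ENNReal) (hq : Measurable q) (hqtop : ∀ τ, q τ ≠ ⊤) :
    ∫⁻ t in Ioi 0, (∫⁻ τ in Ioi t, q τ * kern a (τ - t)) ^ (2:ℕ)
      ≤ (ENNReal.ofReal (1/a)) ^ (2:ℕ) * ∫⁻ τ in Ioi 0, q τ ^ (2:ℕ) := by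
  have h1 : ∫⁻ t in Ioi 0, (∫⁻ τ in Ioi t, q τ * kern a (τ - t)) ^ (2:ℕ)
      ≤ ENNReal.ofReal (1/a) *
        ∫⁻ t in Ioi 0, ∫⁻ τ in Ioi t, q τ ^ (2:ℕ) * kern a (τ - t) := by
    rw [← lintegral_const_mul' _ _ ENNReal.ofReal_ne_top]
    exact lintegral_mono fun t => CS_bound ha q hq t
  have h2 : ∫⁻ t in Ioi 0, ∫⁻ τ in Ioi t, q τ ^ (2:ℕ) * kern a (τ - t)
      ≤ ENNReal.ofReal (1/a) * ∫⁻ τ in Ioi 0, q τ ^ (2:ℕ) := by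
    set G : ℝ → ℝ → ENNReal :=
      fun t τ => (Ioi t).indicator (fun τ' => q τ' ^ (2:ℕ) * kern a (τ' - t)) τ with hG
    have hGm : Measurable (Function.uncurry G) := by
      have : Function.uncurry G = {p : ℝ × ℝ | p.1 < p.2}.indicator
          (fun p => q p.2 ^ (2:ℕ) * kern a (p.2 - p.1)) := by
        ext ⟨t, τ⟩
        by_cases hp : t < τ <;>
          simp [Function.uncurry, hG, indicator, hp, mem_Ioi]
      rw [this]
      exact (((hq.comp measurable_snd).pow_const 2).mul
        ((kern_meas a).comp (measurable_snd.sub measurable_fst))).indicator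
        (measurableSet_lt measurable_fst measurable_snd)
    have swap := lintegral_lintegral_swap (μ := volume.restrict (Ioi 0))
      (ν := volume.restrict (Ioi 0)) hGm.aemeasurable
    have e3 : ∫⁻ t in Ioi 0, ∫⁻ τ in Ioi t, q τ ^ (2:ℕ) * kern a (τ - t)
        = ∫⁻ t in Ioi 0, ∫⁻ τ in Ioi 0, G t τ := by
      apply setLIntegral_congr_fun_ae measurableSet_Ioi (ae_of_all _ fun t ht => ?_)
      rw [hG]
      rw [lintegral_indicator measurableSet_Ioi,
        Measure.restrict_restrict measurableSet_Ioi,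
        inter_eq_left.mpr (Ioi_subset_Ioi (le_of_lt ht))]
    rw [e3, swap]
    have e4 : ∀ τ, ∫⁻ t in Ioi 0, G t τ ≤ q τ ^ (2:ℕ) * ENNReal.ofReal (1/a) := by
      intro τ
      have e5 : ∀ t, G t τ = (Iio τ).indicator (fun t' => q τ ^ (2:ℕ) * kern a (τ - t')) t := by
        intro t
        by_cases h : t < τ <;> simp [hG, indicator, h, mem_Ioi, mem_Iio]
      calc ∫⁻ t in Ioi 0, G t τ
          = ∫⁻ t in Ioi 0, (Iio τ).indicator (fun t' => q τ ^ (2:ℕ) * kern a (τ - t')) t := by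
            exact lintegral_congr fun t => e5 t
        _ = ∫⁻ t in Iio τ ∩ Ioi 0, q τ ^ (2:ℕ) * kern a (τ - t) := by
            rw [lintegral_indicator measurableSet_Iio,
              Measure.restrict_restrict measurableSet_Iio]
        _ ≤ ∫⁻ t in Iio τ, q τ ^ (2:ℕ) * kern a (τ - t) :=
            lintegral_mono_set inter_subset_left
        _ = q τ ^ (2:ℕ) * ∫⁻ t in Iio τ, kern a (τ - t) :=
            lintegral_const_mul' _ _ (ENNReal.pow_ne_top (hqtop τ))
        _ = q τ ^ (2:ℕ) * ENNReal.ofReal (1/a) := by rw [exp_lint_left ha τ]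
    calc ∫⁻ τ in Ioi 0, ∫⁻ t in Ioi 0, G t τ
        ≤ ∫⁻ τ in Ioi 0, q τ ^ (2:ℕ) * ENNReal.ofReal (1/a) := lintegral_mono fun τ => e4 τ
      _ = ENNReal.ofReal (1/a) * ∫⁻ τ in Ioi 0, q τ ^ (2:ℕ) := by
          rw [lintegral_mul_const' _ _ ENNReal.ofReal_ne_top, mul_comm]
  calc ∫⁻ t in Ioi 0, (∫⁻ τ in Ioi t, q τ * kern a (τ - t)) ^ (2:ℕ)
      ≤ ENNReal.ofReal (1/a) *
        ∫⁻ t in Ioi 0, ∫⁻ τ in Ioi t, q τ ^ (2:ℕ) * kern a (τ - t) := h1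
    _ ≤ ENNReal.ofReal (1/a) * (ENNReal.ofReal (1/a) * ∫⁻ τ in Ioi 0, q τ ^ (2:ℕ)) := by
        gcongr
    _ = (ENNReal.ofReal (1/a)) ^ (2:ℕ) * ∫⁻ τ in Ioi 0, q τ ^ (2:ℕ) := by ring


lemma ae_hasDerivAt_primitive (h : ℝ → ℂ) (hint : Integrable h) :
    ∀ᵐ t ∂(volume : Measure ℝ), HasDerivAt (fun u => ∫ s in (0:ℝ)..u, h s) (h t) t := by
  filter_upwards [IsUnifLocDoublingMeasure.ae_tendsto_average (μ := (volume : Measure ℝ))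
    hint.locallyIntegrable 1] with t ht
  rw [hasDerivAt_iff_tendsto_slope]
  have δlim : Tendsto (fun u : ℝ => |u - t| / 2) (𝓝[≠] t) (𝓝[>] 0) := by
    rw [tendsto_nhdsWithin_iff]
    constructor
    · have : Tendsto (fun u : ℝ => |u - t| / 2) (𝓝 t) (𝓝 (|t - t| / 2)) :=
        (((continuous_id.sub continuous_const).abs).div_const 2).tendsto t
      simp only [sub_self, abs_zero, zero_div] at this
      exact this.mono_left nhdsWithin_le_nhds
    · filter_upwards [eventually_mem_nhdsWithin] with u hu
      have : u - t ≠ 0 := sub_ne_zero.2 hu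
      simp only [mem_Ioi]
      positivity
  have xmem : ∀ᶠ u : ℝ in 𝓝[≠] t, t ∈ Metric.closedBall ((t + u) / 2) (1 * (|u - t| / 2)) := by
    refine Eventually.of_forall fun u => ?_
    rw [Metric.mem_closedBall, Real.dist_eq, one_mul]
    rw [abs_le]
    constructor <;> [skip; skip] <;> cases abs_cases (u - t) with
    | inl hc => rw [hc.1]; linarith [hc.2]
    | inr hc => rw [hc.1]; linarith [hc.2]
  have key := ht (fun u => (t + u) / 2) (fun u => |u - t| / 2) δlim xmem
  refine key.congr' ?_
  filter_upwards [eventually_mem_nhdsWithin] with u hu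
  have hut : u ≠ t := hu
  have hball : Metric.closedBall ((t + u) / 2) (|u - t| / 2)
      = Icc (min t u) (max t u) := by
    rw [Real.closedBall_eq_Icc]
    rcases le_total t u with hc | hc
    · rw [abs_of_nonneg (by linarith), min_eq_left hc, max_eq_right hc]
      congr 1 <;> ring
    · rw [abs_of_nonpos (by linarith), min_eq_right hc, max_eq_left hc]
      congr 1 <;> ring
  rw [setAverage_eq, hball, Real.volume_real_Icc]
  have hPuPt : (∫ s in (0:ℝ)..u, h s) - ∫ s in (0:ℝ)..t, h s = ∫ s in t..u, h s :=
    intervalIntegral.integral_interval_sub_left hint.intervalIntegrable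
      hint.intervalIntegrable
  rw [slope_def_module, hPuPt]
  rcases lt_or_gt_of_ne hut with hc | hc
  · -- u < t
    rw [min_eq_right hc.le, max_eq_left hc.le,
      intervalIntegral.integral_symm, intervalIntegral.integral_of_le hc.le,
      ← integral_Icc_eq_integral_Ioc]
    rw [max_eq_left (by linarith : (0:ℝ) ≤ t - u)]
    rw [show (t - u)⁻¹ = -(u - t)⁻¹ by rw [← inv_neg, neg_sub], neg_smul, smul_neg]
  · -- t < u
    rw [min_eq_left hc.le, max_eq_right hc.le,
      intervalIntegral.integral_of_le hc.le, ← integral_Icc_eq_integral_Ioc]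
    rw [max_eq_left (by linarith : (0:ℝ) ≤ u - t)]

lemma eLpNorm_two (ν : Measure ℝ) (f : ℝ → ℂ) :
    eLpNorm f 2 ν = (∫⁻ x, (‖f x‖₊ : ENNReal) ^ (2:ℕ) ∂ν) ^ (1/2 : ℝ) := by
  rw [eLpNorm_eq_lintegral_rpow_enorm_toReal two_ne_zero ENNReal.ofNat_ne_top]
  norm_num
  rfl

lemma sqrt_sq_mul (x y : ENNReal) :
    (x ^ (2:ℕ) * y) ^ (1/2 : ℝ) = x * y ^ (1/2 : ℝ) := by
  rw [ENNReal.mul_rpow_of_nonneg _ _ (by norm_num), ← ENNReal.rpow_natCast x,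
    ← ENNReal.rpow_mul]
  norm_num

noncomputable def halfLineMeasure : Measure ℝ := volume.restrict (Set.Ioi (0 : ℝ))

/-- H^{1,1} bound for F(t) = ∫_t^∞ f(τ) e^{-4Im(λ²)(t-τ)} dτ, with a constant
depending only on λ. -/
theorem integral_tail_exponential_H11 (l : ℂ) (hl : (l ^ 2).im < 0) :
    ∃ c : NNReal, 0 < c ∧ ∀ f : ℝ → ℂ,
      MemLp f 2 halfLineMeasure →
      MemLp (fun t => t • f t) 2 halfLineMeasure →
      (MemLp (fun t => ∫ τ in Set.Ioi t,
          f τ * ((Real.exp (-4 * (l ^ 2).im * (t - τ)) : ℝ) : ℂ)) 2 halfLineMeasure ∧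
       MemLp (deriv (fun t => ∫ τ in Set.Ioi t,
          f τ * ((Real.exp (-4 * (l ^ 2).im * (t - τ)) : ℝ) : ℂ))) 2 halfLineMeasure ∧
       MemLp (fun t => t • ∫ τ in Set.Ioi t,
          f τ * ((Real.exp (-4 * (l ^ 2).im * (t - τ)) : ℝ) : ℂ)) 2 halfLineMeasure ∧
       eLpNorm (fun t => ∫ τ in Set.Ioi t,
          f τ * ((Real.exp (-4 * (l ^ 2).im * (t - τ)) : ℝ) : ℂ)) 2 halfLineMeasure +
         eLpNorm (deriv (fun t => ∫ τ in Set.Ioi t,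
          f τ * ((Real.exp (-4 * (l ^ 2).im * (t - τ)) : ℝ) : ℂ))) 2 halfLineMeasure +
         eLpNorm (fun t => t • ∫ τ in Set.Ioi t,
          f τ * ((Real.exp (-4 * (l ^ 2).im * (t - τ)) : ℝ) : ℂ)) 2 halfLineMeasure ≤
       (c : ENNReal) *
         (eLpNorm f 2 halfLineMeasure + eLpNorm (fun t => t • f t) 2 halfLineMeasure)) := by
  classical
  set μ : Measure ℝ := volume.restrict (Set.Ioi (0 : ℝ)) with hμdef
  have hμ : halfLineMeasure = μ := rfl
  set a : ℝ := -4 * (l ^ 2).im with ha_def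
  have ha : 0 < a := by rw [ha_def]; nlinarith
  set I0 : ENNReal := ENNReal.ofReal (1/a) with hI0
  have hI0top : I0 ≠ ⊤ := ENNReal.ofReal_ne_top
  refine ⟨Real.toNNReal (1/a) + 2, by positivity, fun f hf hf1 => ?_⟩
  rw [hμ] at hf hf1 ⊢
  -- measurable representative
  set g : ℝ → ℂ := (hf.1.mk f) with hgdef
  have hgsm : StronglyMeasurable g := hf.1.stronglyMeasurable_mk
  have hfg : f =ᵐ[μ] g := hf.1.ae_eq_mk
  have hg : MemLp g 2 μ := hf.ae_eq hfg
  have hg1 : MemLp (fun t => t • g t) 2 μ :=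
    hf1.ae_eq (hfg.mono fun x hx => by simp only [hx])
  -- notation
  set F : ℝ → ℂ := fun t => ∫ τ in Set.Ioi t,
      f τ * ((Real.exp (-4 * (l ^ 2).im * (t - τ)) : ℝ) : ℂ) with hFdef
  set Fg : ℝ → ℂ := fun t => ∫ τ in Set.Ioi t,
      g τ * ((Real.exp (-(a * (τ - t))) : ℝ) : ℂ) with hFgdef
  have hFFg : ∀ t : ℝ, 0 ≤ t → F t = Fg t := by
    intro t ht
    have hsub : Ioi t ⊆ Ioi (0:ℝ) := Ioi_subset_Ioi ht
    have hae : f =ᵐ[volume.restrict (Ioi t)] g :=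
      ae_restrict_of_ae_restrict_of_subset hsub hfg
    refine integral_congr_ae (hae.mono fun τ hτ => ?_)
    simp only
    rw [hτ]
    congr 2
    rw [ha_def]
    ring
  -- the auxiliary integrable function
  set h : ℝ → ℂ := (Ioi (0:ℝ)).indicator (fun τ => g τ * ((Real.exp (-(a * τ)) : ℝ) : ℂ))
    with hhdef
  have hexpL2 : MemLp (fun τ => ((Real.exp (-(a * τ)) : ℝ) : ℂ)) 2 μ := by
    rw [memLp_two_iff_integrable_sq_norm]
    · apply Integrable.congr ((exp_neg_integrableOn_Ioi 0 (by linarith : (0:ℝ) < 2*a)))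
      refine Eventually.of_forall fun τ => ?_
      simp only
      rw [Complex.norm_real, Real.norm_eq_abs, abs_of_pos (Real.exp_pos _), sq, ← Real.exp_add]
      congr 1
      ring
    · exact (Complex.continuous_ofReal.comp
        (Real.continuous_exp.comp (continuous_const.mul continuous_id).neg)).aestronglyMeasurable
  have hprod : IntegrableOn (fun τ => g τ * ((Real.exp (-(a * τ)) : ℝ) : ℂ)) (Ioi 0) volume := by
    have := (hg.smul hexpL2
      : MemLp ((fun τ => ((Real.exp (-(a * τ)) : ℝ) : ℂ)) • g) 1 μ)
    have h2 := memLp_one_iff_integrable.mp this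
    apply h2.congr (Eventually.of_forall fun τ => ?_)
    simp [Pi.smul_apply, smul_eq_mul, mul_comm]
  have hint : Integrable h volume := hprod.integrable_indicator measurableSet_Ioi
  set P : ℝ → ℂ := fun u => ∫ s in (0:ℝ)..u, h s with hPdef
  have hPcont : Continuous P := hint.continuous_primitive 0
  set Cst : ℂ := ∫ τ in Ioi (0:ℝ), h τ with hCst
  set F2 : ℝ → ℂ := fun t => ((Real.exp (a * t) : ℝ) : ℂ) * (Cst - P t) with hF2def
  have hF2cont : Continuous F2 := by
    apply Continuous.mul
    · exact Complex.continuous_ofReal.comp (Real.continuous_exp.comp (continuous_const.mul continuous_id))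
    · exact continuous_const.sub hPcont
  -- Fg = F2 on t ≥ 0
  have hFgF2 : ∀ t : ℝ, 0 ≤ t → Fg t = F2 t := by
    intro t ht
    have hIoisub : Ioi t ⊆ Ioi (0:ℝ) := Ioi_subset_Ioi ht
    have e1 : Fg t = ∫ τ in Ioi t, ((Real.exp (a * t) : ℝ) : ℂ) * h τ := by
      refine setIntegral_congr_fun measurableSet_Ioi fun τ hτ => ?_
      rw [hhdef, indicator_of_mem (hIoisub hτ)]
      rw [show ((Real.exp (a * t) : ℝ) : ℂ) * (g τ * ((Real.exp (-(a * τ)) : ℝ) : ℂ))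
        = g τ * (((Real.exp (a * t) : ℝ) : ℂ) * ((Real.exp (-(a * τ)) : ℝ) : ℂ)) from by ring,
        ← Complex.ofReal_mul, ← Real.exp_add]
      congr 2
      ring
    rw [e1, integral_const_mul]
    congr 1
    have hint1 : IntegrableOn h (Ioc 0 t) volume := hint.integrableOn
    have hint2 : IntegrableOn h (Ioi t) volume := hint.integrableOn
    have hunion : (∫ τ in Ioc 0 t, h τ) + ∫ τ in Ioi t, h τ = Cst := by
      rw [hCst, ← setIntegral_union (Ioc_disjoint_Ioi le_rfl) measurableSet_Ioi hint1 hint2,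
        Ioc_union_Ioi_eq_Ioi ht]
    have hP : P t = ∫ τ in Ioc 0 t, h τ := intervalIntegral.integral_of_le ht
    rw [hP]
    rw [← hunion]
    ring
  -- L² machinery
  set q : ℝ → ENNReal := fun τ => (‖g τ‖₊ : ENNReal) with hqdef
  have hqm : Measurable q := hgsm.measurable.nnnorm.coe_nnreal_ennreal
  have hqtop : ∀ τ, q τ ≠ ⊤ := fun τ => ENNReal.coe_ne_top
  have hkern : ∀ t τ : ℝ, (‖((Real.exp (-(a * (τ - t))) : ℝ) : ℂ)‖₊ : ENNReal)
      = kern a (τ - t) := by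
    intro t τ
    rw [Complex.nnnorm_real, ← enorm_eq_nnnorm, Real.enorm_eq_ofReal (Real.exp_pos _).le]
    rfl
  have hnorm : ∀ t : ℝ, (‖Fg t‖₊ : ENNReal) ≤ ∫⁻ τ in Ioi t, q τ * kern a (τ - t) := by
    intro t
    calc (‖Fg t‖₊ : ENNReal)
        ≤ ∫⁻ τ in Ioi t, ‖g τ * ((Real.exp (-(a * (τ - t))) : ℝ) : ℂ)‖₊ :=
          enorm_integral_le_lintegral_enorm _
      _ = ∫⁻ τ in Ioi t, q τ * kern a (τ - t) := by
          refine lintegral_congr fun τ => ?_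
          rw [nnnorm_mul, ENNReal.coe_mul, hkern t τ]
  have hNFg : eLpNorm Fg 2 μ ≤ I0 * eLpNorm g 2 μ := by
    rw [eLpNorm_two μ Fg, eLpNorm_two μ g]
    calc (∫⁻ t, (‖Fg t‖₊ : ENNReal) ^ (2:ℕ) ∂μ) ^ (1/2 : ℝ)
        ≤ (∫⁻ t in Ioi 0, (∫⁻ τ in Ioi t, q τ * kern a (τ - t)) ^ (2:ℕ)) ^ (1/2 : ℝ) := by
          apply ENNReal.rpow_le_rpow _ (by norm_num)
          exact lintegral_mono fun t => pow_le_pow_left₀ (by positivity) (hnorm t) 2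
      _ ≤ (I0 ^ (2:ℕ) * ∫⁻ τ in Ioi 0, q τ ^ (2:ℕ)) ^ (1/2 : ℝ) :=
          ENNReal.rpow_le_rpow (op_bound ha q hqm hqtop) (by norm_num)
      _ = I0 * (∫⁻ τ, q τ ^ (2:ℕ) ∂μ) ^ (1/2 : ℝ) := sqrt_sq_mul I0 _
  have hFgF2ae : Fg =ᵐ[μ] F2 := by
    filter_upwards [ae_restrict_mem measurableSet_Ioi] with t ht using hFgF2 t (le_of_lt ht)
  have hFgAESM : AEStronglyMeasurable Fg μ :=
    hF2cont.aestronglyMeasurable.congr hFgF2ae.symm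
  have hMemFg : MemLp Fg 2 μ :=
    ⟨hFgAESM, lt_of_le_of_lt hNFg (ENNReal.mul_lt_top hI0top.lt_top hg.2)⟩
  -- the weighted bound
  set q2 : ℝ → ENNReal := fun τ => ENNReal.ofReal τ * q τ with hq2def
  have hq2m : Measurable q2 := (ENNReal.measurable_ofReal.comp measurable_id).mul hqm
  have hq2top : ∀ τ, q2 τ ≠ ⊤ :=
    fun τ => ENNReal.mul_ne_top ENNReal.ofReal_ne_top (hqtop τ)
  have hnorm2 : ∀ t ∈ Ioi (0:ℝ), (‖t • Fg t‖₊ : ENNReal)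
      ≤ ∫⁻ τ in Ioi t, q2 τ * kern a (τ - t) := by
    intro t ht
    have e : (‖t • Fg t‖₊ : ENNReal) = ENNReal.ofReal t * (‖Fg t‖₊ : ENNReal) := by
      rw [nnnorm_smul, ENNReal.coe_mul, ← enorm_eq_nnnorm t, Real.enorm_eq_ofReal (le_of_lt ht)]
    calc (‖t • Fg t‖₊ : ENNReal)
        = ENNReal.ofReal t * (‖Fg t‖₊ : ENNReal) := e
      _ ≤ ENNReal.ofReal t * ∫⁻ τ in Ioi t, q τ * kern a (τ - t) := by
          gcongr
          exact hnorm t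
      _ = ∫⁻ τ in Ioi t, ENNReal.ofReal t * (q τ * kern a (τ - t)) :=
          (lintegral_const_mul' _ _ ENNReal.ofReal_ne_top).symm
      _ ≤ ∫⁻ τ in Ioi t, q2 τ * kern a (τ - t) := by
          refine setLIntegral_mono (hq2m.mul ((kern_meas a).comp
            (measurable_id.sub measurable_const))) fun τ hτ => ?_
          simp only [hq2def]
          rw [← mul_assoc]
          gcongr
          exact le_of_lt hτ
  have hq2L : (∫⁻ τ, q2 τ ^ (2:ℕ) ∂μ) = ∫⁻ τ, (‖τ • g τ‖₊ : ENNReal) ^ (2:ℕ) ∂μ := by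
    refine setLIntegral_congr_fun_ae measurableSet_Ioi (ae_of_all _ fun τ hτ => ?_)
    congr 1
    rw [nnnorm_smul, ENNReal.coe_mul, ← enorm_eq_nnnorm τ, Real.enorm_eq_ofReal (le_of_lt hτ), hq2def]
  have hNtFg : eLpNorm (fun t => t • Fg t) 2 μ ≤ I0 * eLpNorm (fun t => t • g t) 2 μ := by
    rw [eLpNorm_two μ _, eLpNorm_two μ _]
    calc (∫⁻ t, (‖t • Fg t‖₊ : ENNReal) ^ (2:ℕ) ∂μ) ^ (1/2 : ℝ)
        ≤ (∫⁻ t in Ioi 0, (∫⁻ τ in Ioi t, q2 τ * kern a (τ - t)) ^ (2:ℕ)) ^ (1/2 : ℝ) := by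
          apply ENNReal.rpow_le_rpow _ (by norm_num)
          refine lintegral_mono_ae ?_
          filter_upwards [ae_restrict_mem measurableSet_Ioi] with t ht
          exact pow_le_pow_left₀ (by positivity) (hnorm2 t ht) 2
      _ ≤ (I0 ^ (2:ℕ) * ∫⁻ τ in Ioi 0, q2 τ ^ (2:ℕ)) ^ (1/2 : ℝ) :=
          ENNReal.rpow_le_rpow (op_bound ha q2 hq2m hq2top) (by norm_num)
      _ = I0 * (∫⁻ τ, (‖τ • g τ‖₊ : ENNReal) ^ (2:ℕ) ∂μ) ^ (1/2 : ℝ) := by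
          rw [sqrt_sq_mul I0 _, hq2L]
  have hMemtFg : MemLp (fun t => t • Fg t) 2 μ :=
    ⟨(aestronglyMeasurable_id.smul hFgAESM : AEStronglyMeasurable (fun t => t • Fg t) μ),
      lt_of_le_of_lt hNtFg (ENNReal.mul_lt_top hI0top.lt_top hg1.2)⟩
  -- derivative
  have hDFg : deriv Fg =ᵐ[μ] fun t => (a : ℂ) * Fg t - g t := by
    filter_upwards [ae_restrict_of_ae (ae_hasDerivAt_primitive h hint),
      ae_restrict_mem measurableSet_Ioi] with t hPd ht
    have htpos : (0:ℝ) < t := ht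
    have hE : HasDerivAt (fun u : ℝ => ((Real.exp (a * u) : ℝ) : ℂ))
        ((Real.exp (a * t) * a : ℝ) : ℂ) t := by
      have h1 : HasDerivAt (fun u : ℝ => Real.exp (a * u)) (Real.exp (a * t) * a) t := by
        simpa using ((hasDerivAt_id t).const_mul a).exp
      exact h1.ofReal_comp
    have hexpmul : ((Real.exp (a * t) : ℝ) : ℂ) * ((Real.exp (-(a * t)) : ℝ) : ℂ) = 1 := by
      rw [← Complex.ofReal_mul, ← Real.exp_add]
      norm_num
    have hF2d : HasDerivAt F2 ((a : ℂ) * F2 t - g t) t := by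
      have hp : HasDerivAt (fun u => Cst - P u) (-(h t)) t := hPd.const_sub Cst
      have hmul : HasDerivAt (fun u => ((Real.exp (a * u) : ℝ) : ℂ) * (Cst - P u))
          (((Real.exp (a * t) * a : ℝ) : ℂ) * (Cst - P t) + ((Real.exp (a * t) : ℝ) : ℂ) * -(h t)) t :=
        hE.mul hp
      have hht : h t = g t * ((Real.exp (-(a * t)) : ℝ) : ℂ) := indicator_of_mem ht _
      convert hmul using 1
      rw [hF2def]
      simp only
      rw [hht]
      push_cast at hexpmul ⊢
      linear_combination (g t) * hexpmul
    have hnhds : Fg =ᶠ[𝓝 t] F2 :=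
      eventually_of_mem (Ioi_mem_nhds htpos) fun u hu => hFgF2 u (le_of_lt hu)
    calc deriv Fg t = deriv F2 t := hnhds.deriv_eq
      _ = (a : ℂ) * F2 t - g t := hF2d.deriv
      _ = (a : ℂ) * Fg t - g t := by rw [hFgF2 t (le_of_lt htpos)]
  have hDmem' : MemLp (fun t => (a : ℂ) * Fg t - g t) 2 μ := by
    have := (hMemFg.const_mul ((a : ℝ) : ℂ)).sub hg
    exact this
  have hDAESM : AEStronglyMeasurable (deriv Fg) μ :=
    (measurable_deriv Fg).aestronglyMeasurable
  have hMemDFg : MemLp (deriv Fg) 2 μ :=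
    ⟨hDAESM, by rw [eLpNorm_congr_ae hDFg]; exact hDmem'.2⟩
  have hNDg : eLpNorm (deriv Fg) 2 μ ≤ eLpNorm g 2 μ + eLpNorm g 2 μ := by
    rw [eLpNorm_congr_ae hDFg]
    calc eLpNorm (fun t => (a : ℂ) * Fg t - g t) 2 μ
        ≤ eLpNorm (fun t => (a : ℂ) * Fg t) 2 μ + eLpNorm g 2 μ :=
          eLpNorm_sub_le (hMemFg.const_mul _).1 hg.1 one_le_two
      _ ≤ ENNReal.ofReal a * eLpNorm Fg 2 μ + eLpNorm g 2 μ := by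
          gcongr
          have hsm := eLpNorm_const_smul_le (c := ((a : ℝ) : ℂ)) (f := Fg) (μ := μ) (p := 2)
          have : (‖((a : ℝ) : ℂ)‖₊ : ENNReal) = ENNReal.ofReal a := by
            rw [Complex.nnnorm_real, ← enorm_eq_nnnorm, Real.enorm_eq_ofReal ha.le]
          calc eLpNorm (fun t => (a : ℂ) * Fg t) 2 μ
              ≤ ‖((a : ℝ) : ℂ)‖₊ • eLpNorm Fg 2 μ := hsm
            _ = ENNReal.ofReal a * eLpNorm Fg 2 μ := by
                rw [ENNReal.smul_def, smul_eq_mul, this]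
      _ ≤ ENNReal.ofReal a * (I0 * eLpNorm g 2 μ) + eLpNorm g 2 μ := by gcongr
      _ = eLpNorm g 2 μ + eLpNorm g 2 μ := by
          rw [← mul_assoc, hI0, ← ENNReal.ofReal_mul ha.le, mul_one_div_cancel ha.ne',
            ENNReal.ofReal_one, one_mul]
  -- transfer to F
  have hFae : F =ᵐ[μ] Fg := by
    filter_upwards [ae_restrict_mem measurableSet_Ioi] with t ht using hFFg t (le_of_lt ht)
  have hDF : deriv F =ᵐ[μ] deriv Fg := by
    filter_upwards [ae_restrict_mem measurableSet_Ioi] with t ht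
    have hEq : F =ᶠ[𝓝 t] Fg :=
      eventually_of_mem (Ioi_mem_nhds ht) fun u hu => hFFg u (le_of_lt hu)
    exact hEq.deriv_eq
  have htFae : (fun t => t • F t) =ᵐ[μ] fun t => t • Fg t :=
    hFae.mono fun t ht => by simp only [ht]
  have htfg : (fun t => t • f t) =ᵐ[μ] fun t => t • g t :=
    hfg.mono fun t ht => by simp only [ht]
  have hMemF : MemLp F 2 μ := hMemFg.ae_eq hFae.symm
  have hMemtF : MemLp (fun t => t • F t) 2 μ := hMemtFg.ae_eq htFae.symm
  have hMemDF : MemLp (deriv F) 2 μ :=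
    ⟨(measurable_deriv F).aestronglyMeasurable,
      by rw [eLpNorm_congr_ae hDF]; exact hMemDFg.2⟩
  have hc : ((Real.toNNReal (1/a) + 2 : NNReal) : ENNReal) = I0 + 2 := by
    rw [ENNReal.coe_add]
    rfl
  have final : eLpNorm F 2 μ + eLpNorm (deriv F) 2 μ + eLpNorm (fun t => t • F t) 2 μ
      ≤ ((Real.toNNReal (1/a) + 2 : NNReal) : ENNReal) *
        (eLpNorm f 2 μ + eLpNorm (fun t => t • f t) 2 μ) := by
    rw [eLpNorm_congr_ae hFae, eLpNorm_congr_ae hDF, eLpNorm_congr_ae htFae,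
      eLpNorm_congr_ae hfg, eLpNorm_congr_ae htfg, hc]
    calc eLpNorm Fg 2 μ + eLpNorm (deriv Fg) 2 μ + eLpNorm (fun t => t • Fg t) 2 μ
        ≤ I0 * eLpNorm g 2 μ + (eLpNorm g 2 μ + eLpNorm g 2 μ)
          + I0 * eLpNorm (fun t => t • g t) 2 μ :=
          add_le_add (add_le_add hNFg hNDg) hNtFg
      _ = I0 * eLpNorm g 2 μ + I0 * eLpNorm (fun t => t • g t) 2 μ
          + 2 * eLpNorm g 2 μ := by ring
      _ ≤ I0 * eLpNorm g 2 μ + I0 * eLpNorm (fun t => t • g t) 2 μ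
          + (2 * eLpNorm g 2 μ + 2 * eLpNorm (fun t => t • g t) 2 μ) := by
          gcongr
          exact le_self_add
      _ = (I0 + 2) * (eLpNorm g 2 μ + eLpNorm (fun t => t • g t) 2 μ) := by ring
  exact ⟨hMemF, hMemDF, hMemtF, final⟩
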